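/- arXiv:2603.00978 — 5 statements merged into one kernel-verified Lean document; each statement's English description precedes it below -/
import Mathlib

section
/- Strong duality for the direction-finding problem: let E be a real inner product space, g_e, g_p ∈ E with g_p ≠ 0, and ε ≥ 0. Then the supremum of ⟨g_e, d⟩ − ½‖d‖² over all d ∈ E with ⟨g_p, d⟩ ≥ −ε equals the minimum over λ ≥ 0 of the dual function L(λ) = ½‖g_e + λ g_p‖² + λ ε, and both the supremum and the minimum are attained. -/
/-!
Weak duality holds because, for feasible `d` and `λ ≥ 0`,
`L(λ) - (⟪g_e, d⟫ - ½‖d‖²) = ½‖g_e + λ g_p - d‖² + λ (⟪g_p, d⟫ + ε) ≥ 0`.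
Both terms vanish for `d = g_e + λ g_p` once `λ ≥ 0` satisfies complementary slackness
`λ (⟪g_p, g_e + λ g_p⟫ + ε) = 0` with `⟪g_p, g_e + λ g_p⟫ ≥ -ε`; such a `λ` is `0` when `g_e`
is itself feasible and otherwise `-(⟪g_p, g_e⟫ + ε) / ‖g_p‖²`, which makes the constraint active.
-/

open RealInnerProductSpace

section DirectionFinding

variable {E : Type*} [NormedAddCommGroup E] [InnerProductSpace ℝ E]

noncomputable def primalObjective (ge d : E) : ℝ := ⟪ge, d⟫ - (1 / 2) * ‖d‖ ^ 2

noncomputable def dualFunction (ge gp : E) (ε lam : ℝ) : ℝ := (1 / 2) * ‖ge + lam • gp‖ ^ 2 + lam * ε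

theorem dualFunction_sub_primalObjective (ge gp d : E) (ε lam : ℝ) :
    dualFunction ge gp ε lam - primalObjective ge d =
      (1 / 2) * ‖ge + lam • gp - d‖ ^ 2 + lam * (⟪gp, d⟫ + ε) := by
  rw [dualFunction, primalObjective, norm_sub_sq_real, inner_add_left, real_inner_smul_left]
  ring

theorem primalObjective_le_dualFunction {ge gp d : E} {ε lam : ℝ} (hd : -ε ≤ ⟪gp, d⟫)
    (hlam : 0 ≤ lam) : primalObjective ge d ≤ dualFunction ge gp ε lam := by
  have hgap := dualFunction_sub_primalObjective ge gp d ε lam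
  have : 0 ≤ lam * (⟪gp, d⟫ + ε) := mul_nonneg hlam (by linarith)
  nlinarith [sq_nonneg ‖ge + lam • gp - d‖]

theorem exists_nonneg_complementary {s c : ℝ} (hc : 0 < c) :
    ∃ lam : ℝ, 0 ≤ lam ∧ 0 ≤ s + lam * c ∧ lam * (s + lam * c) = 0 := by
  by_cases hs : 0 ≤ s
  · exact ⟨0, le_rfl, by simpa using hs, zero_mul _⟩
  · have hcancel : s + -s / c * c = 0 := by field_simp; ring
    exact ⟨-s / c, div_nonneg (by linarith) hc.le, hcancel.ge, by rw [hcancel, mul_zero]⟩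

theorem exists_kkt_multiplier (ge : E) {gp : E} (hgp : gp ≠ 0) (ε : ℝ) :
    ∃ lam : ℝ, 0 ≤ lam ∧ -ε ≤ ⟪gp, ge + lam • gp⟫ ∧
      lam * (⟪gp, ge + lam • gp⟫ + ε) = 0 := by
  have hconstraint (lam : ℝ) :
      ⟪gp, ge + lam • gp⟫ + ε = (⟪gp, ge⟫ + ε) + lam * ‖gp‖ ^ 2 := by
    rw [inner_add_right, real_inner_smul_right, real_inner_self_eq_norm_sq]
    ring
  obtain ⟨lam, hlam, hfeas, hslack⟩ :=
    exists_nonneg_complementary (s := ⟪gp, ge⟫ + ε) (pow_pos (norm_pos_iff.mpr hgp) 2)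
  refine ⟨lam, hlam, ?_, by rwa [hconstraint]⟩
  linarith [hconstraint lam]

theorem primalObjective_eq_dualFunction_of_complementary {ge gp : E} {ε lam : ℝ}
    (hslack : lam * (⟪gp, ge + lam • gp⟫ + ε) = 0) :
    primalObjective ge (ge + lam • gp) = dualFunction ge gp ε lam := by
  have hgap := dualFunction_sub_primalObjective ge gp (ge + lam • gp) ε lam
  rw [sub_self, norm_zero, hslack] at hgap
  linarith

end DirectionFinding

theorem strong_duality_general
    {E : Type*} [NormedAddCommGroup E] [InnerProductSpace ℝ E]
    (ge gp : E) (hgp : gp ≠ 0) (ε : ℝ) :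
    ∃ (dstar : E) (lamstar : ℝ),
      ⟪gp, dstar⟫ ≥ -ε ∧ 0 ≤ lamstar ∧
      (∀ d : E, ⟪gp, d⟫ ≥ -ε →
          ⟪ge, d⟫ - (1 / 2) * ‖d‖ ^ 2 ≤ ⟪ge, dstar⟫ - (1 / 2) * ‖dstar‖ ^ 2) ∧
      (∀ lam : ℝ, 0 ≤ lam →
          (1 / 2) * ‖ge + lamstar • gp‖ ^ 2 + lamstar * ε ≤
            (1 / 2) * ‖ge + lam • gp‖ ^ 2 + lam * ε) ∧
      ⟪ge, dstar⟫ - (1 / 2) * ‖dstar‖ ^ 2 =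
        (1 / 2) * ‖ge + lamstar • gp‖ ^ 2 + lamstar * ε := by
  obtain ⟨lamstar, hlamstar, hfeas, hslack⟩ := exists_kkt_multiplier ge hgp ε
  have hgap := primalObjective_eq_dualFunction_of_complementary hslack
  exact ⟨ge + lamstar • gp, lamstar, hfeas, hlamstar,
    fun d hd => (primalObjective_le_dualFunction hd hlamstar).trans_eq hgap.symm,
    fun lam hlam => hgap.symm.trans_le (primalObjective_le_dualFunction hfeas hlam), hgap⟩

/-- Strong duality: there exist a feasible d* and a multiplier λ* ≥ 0
such that d* maximizes the primal objective over the feasible set, λ* minimizes the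
dual function over the nonnegative reals, and the two optimal values coincide.
(Hence the supremum of the primal equals the minimum of the dual, both attained.) -/
theorem strong_duality
    {E : Type*} [NormedAddCommGroup E] [InnerProductSpace ℝ E]
    (ge gp : E) (hgp : gp ≠ 0) (ε : ℝ) (hε : 0 ≤ ε) :
    ∃ (dstar : E) (lamstar : ℝ),
      ⟪gp, dstar⟫ ≥ -ε ∧ 0 ≤ lamstar ∧
      (∀ d : E, ⟪gp, d⟫ ≥ -ε →
          ⟪ge, d⟫ - (1 / 2) * ‖d‖ ^ 2 ≤ ⟪ge, dstar⟫ - (1 / 2) * ‖dstar‖ ^ 2) ∧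
      (∀ lam : ℝ, 0 ≤ lam →
          (1 / 2) * ‖ge + lamstar • gp‖ ^ 2 + lamstar * ε ≤
            (1 / 2) * ‖ge + lam • gp‖ ^ 2 + lam * ε) ∧
      ⟪ge, dstar⟫ - (1 / 2) * ‖dstar‖ ^ 2 =
        (1 / 2) * ‖ge + lamstar • gp‖ ^ 2 + lamstar * ε :=
  strong_duality_general ge gp hgp ε
end

section
/- Per-step variation bound for the dual functions: let E be a complete real inner product space, and let L_e, L_p : E → ℝ be differentiable with G-Lipschitz gradients and with gradient norms bounded by L, i.e., ‖∇L_e(x)‖ ≤ L and ‖∇L_p(x)‖ ≤ L for all x ∈ E. For θ, θ' ∈ E and ε, ε' ∈ ℝ define L_θ(λ) = ½‖∇L_e(θ) + λ ∇L_p(θ)‖² + λ ε and L_{θ'}(λ) = ½‖∇L_e(θ') + λ ∇L_p(θ')‖² + λ ε'. Then for every D ≥ 0 and every λ ∈ [0, D]: |L_{θ'}(λ) − L_θ(λ)| ≤ (1 + D)² L G ‖θ' − θ‖ + D |ε' − ε|. -/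
/-! Both dual functions are `½‖·‖²` evaluated at `gradLe + lam • gradLp`, which has norm at most
`(1 + D) L` and moves by at most `(1 + D) G ‖θ' - θ‖` between `θ` and `θ'`. Since `½‖·‖²` is
`R`-Lipschitz on the ball of radius `R`, the quadratic parts differ by at most
`(1 + D)² L G ‖θ' - θ‖`; the linear parts differ by `lam |ε' - ε| ≤ D |ε' - ε|`. -/

section

variable {F : Type*} [SeminormedAddCommGroup F]

theorem norm_add_smul_le_of_le [NormedSpace ℝ F] {u v : F} {A B c D : ℝ}
    (hu : ‖u‖ ≤ A) (hv : ‖v‖ ≤ B) (hc : c ∈ Set.Icc 0 D) : ‖u + c • v‖ ≤ A + D * B := by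
  calc ‖u + c • v‖ ≤ ‖u‖ + c * ‖v‖ := by
        simpa only [norm_smul, Real.norm_of_nonneg hc.1] using norm_add_le u (c • v)
    _ ≤ A + D * B := by gcongr; exacts [hc.1.trans hc.2, hc.2]

theorem abs_half_sq_norm_sub_half_sq_norm_le {a b : F} {R : ℝ} (ha : ‖a‖ ≤ R) (hb : ‖b‖ ≤ R) :
    |1 / 2 * ‖a‖ ^ 2 - 1 / 2 * ‖b‖ ^ 2| ≤ R * ‖a - b‖ := by
  have hfactor : 1 / 2 * ‖a‖ ^ 2 - 1 / 2 * ‖b‖ ^ 2 = (‖a‖ + ‖b‖) / 2 * (‖a‖ - ‖b‖) := by ring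
  rw [hfactor, abs_mul, abs_of_nonneg (by positivity)]
  exact mul_le_mul (by linarith) (abs_norm_sub_norm_le a b) (abs_nonneg _)
    ((norm_nonneg a).trans ha)

end

theorem dual_per_step_variation_bound_general
    {E : Type*} [NormedAddCommGroup E] [InnerProductSpace ℝ E]
    (gradLe gradLp : E → E) (G L : ℝ)
    (hLipLe : ∀ x y : E, ‖gradLe x - gradLe y‖ ≤ G * ‖x - y‖)
    (hLipLp : ∀ x y : E, ‖gradLp x - gradLp y‖ ≤ G * ‖x - y‖)
    (hBndLe : ∀ x : E, ‖gradLe x‖ ≤ L)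
    (hBndLp : ∀ x : E, ‖gradLp x‖ ≤ L)
    (θ θ' : E) (ε ε' : ℝ) :
    ∀ D : ℝ, 0 ≤ D → ∀ lam : ℝ, lam ∈ Set.Icc (0 : ℝ) D →
      |((1 / 2) * ‖gradLe θ' + lam • gradLp θ'‖ ^ 2 + lam * ε') -
          ((1 / 2) * ‖gradLe θ + lam • gradLp θ‖ ^ 2 + lam * ε)| ≤
        (1 + D) ^ 2 * L * G * ‖θ' - θ‖ + D * |ε' - ε| := by
  intro D _ lam hlam
  have hbound (x : E) : ‖gradLe x + lam • gradLp x‖ ≤ (1 + D) * L := by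
    linarith [norm_add_smul_le_of_le (hBndLe x) (hBndLp x) hlam]
  have hmove : ‖(gradLe θ' + lam • gradLp θ') - (gradLe θ + lam • gradLp θ)‖ ≤
      (1 + D) * (G * ‖θ' - θ‖) := by
    rw [add_sub_add_comm, ← smul_sub]
    linarith [norm_add_smul_le_of_le (hLipLe θ' θ) (hLipLp θ' θ) hlam]
  have hquad := (abs_half_sq_norm_sub_half_sq_norm_le (hbound θ') (hbound θ)).trans
    (mul_le_mul_of_nonneg_left hmove ((norm_nonneg _).trans (hbound θ)))
  have hlin : |lam * (ε' - ε)| ≤ D * |ε' - ε| := by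
    rw [abs_mul, abs_of_nonneg hlam.1]
    exact mul_le_mul_of_nonneg_right hlam.2 (abs_nonneg _)
  calc _ = |(1 / 2 * ‖gradLe θ' + lam • gradLp θ'‖ ^ 2 - 1 / 2 * ‖gradLe θ + lam • gradLp θ‖ ^ 2)
          + lam * (ε' - ε)| := by ring_nf
    _ ≤ _ := (abs_add_le _ _).trans (by linarith)

/-- Per-step variation bound for the dual functions: if L_e and L_p have
G-Lipschitz gradients with norms bounded by L, then for λ ∈ [0, D],
|L_{θ'}(λ) − L_θ(λ)| ≤ (1 + D)² L G ‖θ' − θ‖ + D |ε' − ε|. -/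
theorem dual_per_step_variation_bound
    {E : Type*} [NormedAddCommGroup E] [InnerProductSpace ℝ E] [CompleteSpace E]
    (Le Lp : E → ℝ) (gradLe gradLp : E → E) (G L : ℝ)
    (hgradLe : ∀ x : E, HasGradientAt Le (gradLe x) x)
    (hgradLp : ∀ x : E, HasGradientAt Lp (gradLp x) x)
    (hLipLe : ∀ x y : E, ‖gradLe x - gradLe y‖ ≤ G * ‖x - y‖)
    (hLipLp : ∀ x y : E, ‖gradLp x - gradLp y‖ ≤ G * ‖x - y‖)
    (hBndLe : ∀ x : E, ‖gradLe x‖ ≤ L)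
    (hBndLp : ∀ x : E, ‖gradLp x‖ ≤ L)
    (θ θ' : E) (ε ε' : ℝ) :
    ∀ D : ℝ, 0 ≤ D → ∀ lam : ℝ, lam ∈ Set.Icc (0 : ℝ) D →
      |((1 / 2) * ‖gradLe θ' + lam • gradLp θ'‖ ^ 2 + lam * ε') -
          ((1 / 2) * ‖gradLe θ + lam • gradLp θ‖ ^ 2 + lam * ε)| ≤
        (1 + D) ^ 2 * L * G * ‖θ' - θ‖ + D * |ε' - ε| :=
  dual_per_step_variation_bound_general gradLe gradLp G L hLipLe hLipLp hBndLe hBndLp θ θ' ε ε'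
end

section
/- Direction-norm bound (Lemma of Appendix A-G): let E be a complete real inner product space and let L_e : E → ℝ be G-smooth and L_p : E → ℝ differentiable. Fix θ ∈ E, λ ≥ 0, ε ∈ ℝ, α with 0 < α ≤ 1/G, set d = ∇L_e(θ) + λ ∇L_p(θ) and θ' = θ − α d, and assume ⟨∇L_p(θ), d⟩ ≤ ε. Then ‖d‖² ≤ (2/α)(L_e(θ) − L_e(θ')) + 2 λ ε. -/
/-!
Along the segment from `θ` to `θ' = θ - α d` the `G`-Lipschitz gradient gives the descent lemma
`L_e(θ') ≤ L_e(θ) - α ⟪∇L_e(θ), d⟫ + (α / 2) ‖d‖²` once `α G ≤ 1`. Since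
`⟪∇L_e(θ), d⟫ = ‖d‖² - λ ⟪∇L_p(θ), d⟫ ≥ ‖d‖² - λ ε`, this rearranges to the claim.
-/

open RealInnerProductSpace Set

lemma image_one_le_of_deriv_le_add_mul {φ φ' : ℝ → ℝ} {K : ℝ}
    (hφ : ∀ t, HasDerivAt φ (φ' t) t) (hφ' : ∀ t ∈ Ico (0 : ℝ) 1, φ' t ≤ φ' 0 + K * t) :
    φ 1 ≤ φ 0 + φ' 0 + K / 2 := by
  have hB : ∀ t, HasDerivAt (fun t : ℝ => φ 0 + t * φ' 0 + K / 2 * t ^ 2) (φ' 0 + K * t) t := by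
    intro t
    refine ((((hasDerivAt_id t).mul_const (φ' 0)).const_add (φ 0)).add
      ((hasDerivAt_pow 2 t).const_mul (K / 2))).congr_deriv ?_
    push_cast
    ring
  have h := image_le_of_deriv_right_le_deriv_boundary
    (fun t _ => (hφ t).continuousAt.continuousWithinAt) (fun t _ => (hφ t).hasDerivWithinAt)
    (by simp) (fun t _ => (hB t).continuousAt.continuousWithinAt)
    (fun t _ => (hB t).hasDerivWithinAt) hφ' (right_mem_Icc.2 zero_le_one)
  linarith

/-- The descent lemma for a function with `G`-Lipschitz gradient. -/
lemma le_add_inner_add_of_lipschitz_gradient {E : Type*} [NormedAddCommGroup E]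
    [InnerProductSpace ℝ E] [CompleteSpace E] {f : E → ℝ} {g : E → E} {G : ℝ}
    (hf : ∀ x, HasGradientAt f (g x) x) (hg : ∀ x y, ‖g x - g y‖ ≤ G * ‖x - y‖) (x v : E) :
    f (x + v) ≤ f x + ⟪g x, v⟫ + G / 2 * ‖v‖ ^ 2 := by
  have hline : ∀ t : ℝ, HasDerivAt (fun t : ℝ => f (x + t • v)) ⟪g (x + t • v), v⟫ t := by
    intro t
    have hpath : HasDerivAt (fun t : ℝ => x + t • v) v t := by
      simpa using ((hasDerivAt_id t).smul_const v).const_add x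
    exact (hf (x + t • v)).hasFDerivAt.comp_hasDerivAt t hpath
  have hgrowth : ∀ t ∈ Ico (0 : ℝ) 1,
      ⟪g (x + t • v), v⟫ ≤ ⟪g (x + (0 : ℝ) • v), v⟫ + G * ‖v‖ ^ 2 * t := by
    rintro t ⟨ht, -⟩
    have : ⟪g (x + t • v) - g x, v⟫ ≤ G * ‖v‖ ^ 2 * t :=
      calc ⟪g (x + t • v) - g x, v⟫ ≤ ‖g (x + t • v) - g x‖ * ‖v‖ := real_inner_le_norm _ _
        _ ≤ G * ‖(x + t • v) - x‖ * ‖v‖ := by gcongr; exact hg _ _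
        _ = G * ‖v‖ ^ 2 * t := by
          rw [add_sub_cancel_left, norm_smul, Real.norm_of_nonneg ht]; ring
    rw [inner_sub_left] at this
    simp only [zero_smul, add_zero]
    linarith
  have h := image_one_le_of_deriv_le_add_mul hline hgrowth
  simp only [zero_smul, add_zero, one_smul] at h
  linarith

lemma inner_sub_half_norm_sq_le_of_lipschitz_gradient {E : Type*} [NormedAddCommGroup E]
    [InnerProductSpace ℝ E] [CompleteSpace E] {f : E → ℝ} {g : E → E} {G α : ℝ}
    (hf : ∀ x, HasGradientAt f (g x) x) (hg : ∀ x y, ‖g x - g y‖ ≤ G * ‖x - y‖)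
    (hα0 : 0 < α) (hαG : α ≤ 1 / G) (x d : E) :
    α * ⟪g x, d⟫ - α / 2 * ‖d‖ ^ 2 ≤ f x - f (x - α • d) := by
  have hG : 0 < G := one_div_pos.1 (hα0.trans_le hαG)
  have hαG' : G * α ≤ 1 := by rwa [le_div_iff₀ hG, mul_comm] at hαG
  have hdesc := le_add_inner_add_of_lipschitz_gradient hf hg x ((-α) • d)
  rw [neg_smul, ← sub_eq_add_neg, inner_neg_right, real_inner_smul_right, norm_neg,
    norm_smul, Real.norm_of_nonneg hα0.le] at hdesc
  nlinarith [mul_le_mul_of_nonneg_right hαG' (mul_nonneg hα0.le (sq_nonneg ‖d‖))]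

theorem direction_norm_bound_general
    {E : Type*} [NormedAddCommGroup E] [InnerProductSpace ℝ E] [CompleteSpace E]
    (Le : E → ℝ) (gradLe gradLp : E → E) (G : ℝ)
    (hgradLe : ∀ x : E, HasGradientAt Le (gradLe x) x)
    (hLipLe : ∀ x y : E, ‖gradLe x - gradLe y‖ ≤ G * ‖x - y‖)
    (θ : E) (lam ε α : ℝ) (hlam : 0 ≤ lam)
    (hα0 : 0 < α) (hαG : α ≤ 1 / G)
    (hconstr : ⟪gradLp θ, gradLe θ + lam • gradLp θ⟫ ≤ ε) :
    ‖gradLe θ + lam • gradLp θ‖ ^ 2 ≤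
      (2 / α) * (Le θ - Le (θ - α • (gradLe θ + lam • gradLp θ))) + 2 * lam * ε := by
  set d := gradLe θ + lam • gradLp θ with hd
  have hsplit : ⟪gradLe θ, d⟫ = ‖d‖ ^ 2 - lam * ⟪gradLp θ, d⟫ := by
    rw [← real_inner_self_eq_norm_sq, hd, inner_add_left _ _ (gradLe θ + _),
      real_inner_smul_left]
    ring
  have hdecrease := inner_sub_half_norm_sq_le_of_lipschitz_gradient hgradLe hLipLe hα0 hαG θ d
  have hpenalty : lam * ⟪gradLp θ, d⟫ ≤ lam * ε := mul_le_mul_of_nonneg_left hconstr hlam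
  rw [div_mul_eq_mul_div, ← sub_le_iff_le_add, le_div_iff₀ hα0]
  nlinarith

/-- Direction-norm bound: with L_e G-smooth, d = ∇L_e(θ) + λ ∇L_p(θ),
θ' = θ − α d, 0 < α ≤ 1/G, λ ≥ 0 and ⟨∇L_p(θ), d⟩ ≤ ε, one has
‖d‖² ≤ (2/α)(L_e(θ) − L_e(θ')) + 2 λ ε. -/
theorem direction_norm_bound
    {E : Type*} [NormedAddCommGroup E] [InnerProductSpace ℝ E] [CompleteSpace E]
    (Le Lp : E → ℝ) (gradLe gradLp : E → E) (G : ℝ)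
    (hgradLe : ∀ x : E, HasGradientAt Le (gradLe x) x)
    (hLipLe : ∀ x y : E, ‖gradLe x - gradLe y‖ ≤ G * ‖x - y‖)
    (hgradLp : ∀ x : E, HasGradientAt Lp (gradLp x) x)
    (θ : E) (lam ε α : ℝ) (hlam : 0 ≤ lam)
    (hα0 : 0 < α) (hαG : α ≤ 1 / G)
    (hconstr : ⟪gradLp θ, gradLe θ + lam • gradLp θ⟫ ≤ ε) :
    ‖gradLe θ + lam • gradLp θ‖ ^ 2 ≤
      (2 / α) * (Le θ - Le (θ - α • (gradLe θ + lam • gradLp θ))) + 2 * lam * ε :=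
  direction_norm_bound_general Le gradLe gradLp G hgradLe hLipLe θ lam ε α hlam hα0 hαG hconstr
end

section
/- Summed normalized-direction bound: let E be a complete real inner product space, L_e : E → ℝ G-smooth and L_p : E → ℝ differentiable. Let iterates satisfy θ_{i+1} = θ_i − α d_i with d_i = ∇L_e(θ_i) + λ_i ∇L_p(θ_i), λ_i ≥ 0, 0 < α ≤ 1/G, and ⟨∇L_p(θ_i), d_i⟩ ≤ ε_i for i = 1, …, t. Then Σ_{i=1}^{t} ‖d_i‖² / (1 + λ_i)² ≤ (2/α)(L_e(θ_1) − L_e(θ_{t+1})) + 2 Σ_{i=1}^{t} λ_i ε_i. -/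
/-! Writing `d = ∇L_e(θ) + λ ∇L_p(θ)`, one has `⟪∇L_e(θ), d⟫ = ‖d‖² - λ ⟪∇L_p(θ), d⟫ ≥ ‖d‖² - λ ε`,
so the descent lemma for the `G`-smooth `L_e` and `α G ≤ 1` give
`α/2 ‖d_i‖² ≤ L_e(θ_i) - L_e(θ_{i+1}) + α λ_i ε_i`. Dividing the left side by `(1 + λ_i)² ≥ 1`
only makes it smaller, and the right side telescopes. -/

open RealInnerProductSpace

section

variable {E : Type*} [NormedAddCommGroup E] [InnerProductSpace ℝ E] [CompleteSpace E]

theorem HasGradientAt.comp_add_smul {f : E → ℝ} {f' x v : E} {s : ℝ}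
    (hf : HasGradientAt f f' (x + s • v)) :
    HasDerivAt (fun s : ℝ => f (x + s • v)) ⟪f', v⟫ s := by
  have hline : HasDerivAt (fun s : ℝ => x + s • v) v s := by
    simpa using ((hasDerivAt_id s).smul_const v).const_add x
  have := hf.hasFDerivAt.comp_hasDerivAt s hline
  simp only [Function.comp_def, InnerProductSpace.toDual_apply_apply] at this
  exact this

theorem apply_add_le_of_lipschitz_gradient {f : E → ℝ} {g : E → E} {G : ℝ}
    (hg : ∀ x, HasGradientAt f (g x) x) (hL : ∀ x y, ‖g x - g y‖ ≤ G * ‖x - y‖) (x v : E) :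
    f (x + v) ≤ f x + ⟪g x, v⟫ + G / 2 * ‖v‖ ^ 2 := by
  have hf (s : ℝ) : HasDerivAt (fun s : ℝ => f (x + s • v)) ⟪g (x + s • v), v⟫ s :=
    (hg _).comp_add_smul
  have hB (s : ℝ) : HasDerivAt (fun s : ℝ => f x + s * ⟪g x, v⟫ + G / 2 * ‖v‖ ^ 2 * s ^ 2)
      (⟪g x, v⟫ + G * ‖v‖ ^ 2 * s) s := by
    refine (((hasDerivAt_id s).mul_const ⟪g x, v⟫).const_add (f x) |>.add
      ((hasDerivAt_pow 2 s).const_mul (G / 2 * ‖v‖ ^ 2))).congr_deriv ?_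
    simp only [one_mul]; push_cast; ring
  have hslope (s : ℝ) (hs : 0 ≤ s) : ⟪g (x + s • v), v⟫ ≤ ⟪g x, v⟫ + G * ‖v‖ ^ 2 * s := by
    have hgap : ‖g (x + s • v) - g x‖ ≤ G * (s * ‖v‖) := by
      simpa [norm_smul, abs_of_nonneg hs] using hL (x + s • v) x
    calc ⟪g (x + s • v), v⟫ = ⟪g x, v⟫ + ⟪g (x + s • v) - g x, v⟫ := by
          rw [inner_sub_left]; ring
      _ ≤ ⟪g x, v⟫ + ‖g (x + s • v) - g x‖ * ‖v‖ := by gcongr; exact real_inner_le_norm _ _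
      _ ≤ ⟪g x, v⟫ + G * (s * ‖v‖) * ‖v‖ := by gcongr
      _ = ⟪g x, v⟫ + G * ‖v‖ ^ 2 * s := by ring
  have key := image_le_of_deriv_right_le_deriv_boundary
    (fun s _ => (hf s).continuousAt.continuousWithinAt) (fun s _ => (hf s).hasDerivWithinAt)
    (by simp) (fun s _ => (hB s).continuousAt.continuousWithinAt)
    (fun s _ => (hB s).hasDerivWithinAt) (fun s hs => hslope s hs.1)
    (Set.right_mem_Icc.2 zero_le_one)
  simpa using key

theorem apply_sub_smul_le_of_lipschitz_gradient {f : E → ℝ} {g : E → E} {G α : ℝ}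
    (hg : ∀ x, HasGradientAt f (g x) x) (hL : ∀ x y, ‖g x - g y‖ ≤ G * ‖x - y‖)
    (hα0 : 0 ≤ α) (hαG : α * G ≤ 1) (x d : E) :
    f (x - α • d) ≤ f x - α * ⟪g x, d⟫ + α / 2 * ‖d‖ ^ 2 := by
  have h := apply_add_le_of_lipschitz_gradient hg hL x (-(α • d))
  rw [← sub_eq_add_neg, inner_neg_right, real_inner_smul_right, norm_neg, norm_smul,
    Real.norm_of_nonneg hα0] at h
  have : G / 2 * (α * ‖d‖) ^ 2 ≤ α / 2 * ‖d‖ ^ 2 := by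
    have := mul_le_mul_of_nonneg_right hαG (by positivity : 0 ≤ α * ‖d‖ ^ 2)
    nlinarith
  linarith

theorem sq_norm_div_one_add_sq_le_of_gradient_step {f : E → ℝ} {g : E → E} {G α lam ε : ℝ}
    (hg : ∀ x, HasGradientAt f (g x) x) (hL : ∀ x y, ‖g x - g y‖ ≤ G * ‖x - y‖)
    (hα0 : 0 < α) (hαG : α ≤ 1 / G) (hlam : 0 ≤ lam) {x p d : E}
    (hd : d = g x + lam • p) (hconstr : ⟪p, d⟫ ≤ ε) :
    ‖d‖ ^ 2 / (1 + lam) ^ 2 ≤ (2 / α) * (f x - f (x - α • d)) + 2 * (lam * ε) := by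
  have hG : 0 < G := one_div_pos.1 (hα0.trans_le hαG)
  have hdescent := apply_sub_smul_le_of_lipschitz_gradient hg hL hα0.le
    ((le_div_iff₀ hG).1 hαG) x d
  have hinner : ⟪g x, d⟫ = ‖d‖ ^ 2 - lam * ⟪p, d⟫ := by
    rw [show g x = d - lam • p by rw [hd]; abel, inner_sub_left, real_inner_smul_left,
      real_inner_self_eq_norm_sq]
  have hdecrease : α / 2 * ‖d‖ ^ 2 ≤ f x - f (x - α • d) + α * (lam * ε) := by
    nlinarith [mul_le_mul_of_nonneg_left hconstr hlam]
  calc ‖d‖ ^ 2 / (1 + lam) ^ 2 ≤ ‖d‖ ^ 2 :=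
        div_le_self (sq_nonneg _) (one_le_pow₀ (by linarith))
    _ = (2 / α) * (α / 2 * ‖d‖ ^ 2) := by field_simp
    _ ≤ (2 / α) * (f x - f (x - α • d) + α * (lam * ε)) := by gcongr
    _ = (2 / α) * (f x - f (x - α • d)) + 2 * (lam * ε) := by field_simp

end

theorem summed_normalized_direction_bound_general
    {E : Type*} [NormedAddCommGroup E] [InnerProductSpace ℝ E] [CompleteSpace E]
    (Le : E → ℝ) (gradLe gradLp : E → E) (G : ℝ)
    (hgradLe : ∀ x : E, HasGradientAt Le (gradLe x) x)
    (hLipLe : ∀ x y : E, ‖gradLe x - gradLe y‖ ≤ G * ‖x - y‖)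
    (θ : ℕ → E) (d : ℕ → E) (lam ε : ℕ → ℝ) (α : ℝ) (t : ℕ)
    (hα0 : 0 < α) (hαG : α ≤ 1 / G)
    (hlam : ∀ i, 1 ≤ i → i ≤ t → 0 ≤ lam i)
    (hd : ∀ i, 1 ≤ i → i ≤ t → d i = gradLe (θ i) + lam i • gradLp (θ i))
    (hupdate : ∀ i, 1 ≤ i → i ≤ t → θ (i + 1) = θ i - α • d i)
    (hconstr : ∀ i, 1 ≤ i → i ≤ t → ⟪gradLp (θ i), d i⟫ ≤ ε i) :
    ∑ i ∈ Finset.Icc 1 t, ‖d i‖ ^ 2 / (1 + lam i) ^ 2 ≤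
      (2 / α) * (Le (θ 1) - Le (θ (t + 1))) +
        2 * ∑ i ∈ Finset.Icc 1 t, lam i * ε i := by
  have htelescope :
      ∑ i ∈ Finset.Icc 1 t, (Le (θ i) - Le (θ (i + 1))) = Le (θ 1) - Le (θ (t + 1)) := by
    rw [← Finset.Ico_add_one_right_eq_Icc, ← neg_sub,
      ← Finset.sum_Ico_sub (fun i => Le (θ i)) (by omega), ← Finset.sum_neg_distrib]
    simp only [neg_sub]
  calc ∑ i ∈ Finset.Icc 1 t, ‖d i‖ ^ 2 / (1 + lam i) ^ 2
      ≤ ∑ i ∈ Finset.Icc 1 t, ((2 / α) * (Le (θ i) - Le (θ (i + 1))) + 2 * (lam i * ε i)) := by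
        refine Finset.sum_le_sum fun i hi => ?_
        obtain ⟨hi1, hit⟩ := Finset.mem_Icc.1 hi
        rw [hupdate i hi1 hit]
        exact sq_norm_div_one_add_sq_le_of_gradient_step hgradLe hLipLe hα0 hαG
          (hlam i hi1 hit) (hd i hi1 hit) (hconstr i hi1 hit)
    _ = (2 / α) * (Le (θ 1) - Le (θ (t + 1))) + 2 * ∑ i ∈ Finset.Icc 1 t, lam i * ε i := by
        rw [Finset.sum_add_distrib, ← Finset.mul_sum, ← Finset.mul_sum, htelescope]

/-- Summed normalized-direction bound: with θ_{i+1} = θ_i − α d_i,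
d_i = ∇L_e(θ_i) + λ_i ∇L_p(θ_i), λ_i ≥ 0, 0 < α ≤ 1/G, ⟨∇L_p(θ_i), d_i⟩ ≤ ε_i for
i = 1, …, t, one has Σ_{i=1}^t ‖d_i‖²/(1+λ_i)² ≤ (2/α)(L_e(θ_1) − L_e(θ_{t+1})) + 2 Σ_{i=1}^t λ_i ε_i. -/
theorem summed_normalized_direction_bound
    {E : Type*} [NormedAddCommGroup E] [InnerProductSpace ℝ E] [CompleteSpace E]
    (Le Lp : E → ℝ) (gradLe gradLp : E → E) (G : ℝ)
    (hgradLe : ∀ x : E, HasGradientAt Le (gradLe x) x)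
    (hLipLe : ∀ x y : E, ‖gradLe x - gradLe y‖ ≤ G * ‖x - y‖)
    (hgradLp : ∀ x : E, HasGradientAt Lp (gradLp x) x)
    (θ : ℕ → E) (d : ℕ → E) (lam ε : ℕ → ℝ) (α : ℝ) (t : ℕ)
    (hα0 : 0 < α) (hαG : α ≤ 1 / G)
    (hlam : ∀ i, 1 ≤ i → i ≤ t → 0 ≤ lam i)
    (hd : ∀ i, 1 ≤ i → i ≤ t → d i = gradLe (θ i) + lam i • gradLp (θ i))
    (hupdate : ∀ i, 1 ≤ i → i ≤ t → θ (i + 1) = θ i - α • d i)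
    (hconstr : ∀ i, 1 ≤ i → i ≤ t → ⟪gradLp (θ i), d i⟫ ≤ ε i) :
    ∑ i ∈ Finset.Icc 1 t, ‖d i‖ ^ 2 / (1 + lam i) ^ 2 ≤
      (2 / α) * (Le (θ 1) - Le (θ (t + 1))) +
        2 * ∑ i ∈ Finset.Icc 1 t, lam i * ε i :=
  summed_normalized_direction_bound_general Le gradLe gradLp G hgradLe hLipLe θ d lam ε α t hα0 hαG
    hlam hd hupdate hconstr
end

section
/- Value of the primal at the surgically corrected direction: let E be a real inner product space, g_e, g_p ∈ E with g_p ≠ 0, ε ∈ ℝ, suppose ⟨g_p, g_e⟩ < −ε, let λ* = (−⟨g_p, g_e⟩ − ε)/‖g_p‖² and d* = g_e + λ* g_p. Then the primal objective value at d* equals the dual value at λ*: ⟨g_e, d*⟩ − ½‖d*‖² = ½‖g_e + λ* g_p‖² + λ* ε. -/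
open RealInnerProductSpace

/-! For any multiplier `λ`, the primal objective at `d = g_e + λ g_p` falls short of the dual value
`L(λ)` by exactly `λ (⟨g_p, g_e⟩ + ε + λ ‖g_p‖²)`. The choice of `λ*` makes the second factor
vanish (complementary slackness), so there is no duality gap. -/

section

variable {E : Type*} [NormedAddCommGroup E] [InnerProductSpace ℝ E]

noncomputable def optimalMultiplier (ge gp : E) (ε : ℝ) : ℝ :=
  (-⟪gp, ge⟫ - ε) / ‖gp‖ ^ 2

theorem primal_eq_dual_sub_mul_slack (ge gp : E) (l ε : ℝ) :
    ⟪ge, ge + l • gp⟫ - (1 / 2) * ‖ge + l • gp‖ ^ 2 =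
      (1 / 2) * ‖ge + l • gp‖ ^ 2 + l * ε - l * (⟪gp, ge⟫ + ε + l * ‖gp‖ ^ 2) := by
  have h_norm : ‖ge + l • gp‖ ^ 2 = ‖ge‖ ^ 2 + 2 * (l * ⟪gp, ge⟫) + l ^ 2 * ‖gp‖ ^ 2 := by
    rw [norm_add_sq_real, inner_smul_right, norm_smul, Real.norm_eq_abs, mul_pow, sq_abs,
      real_inner_comm]
  have h_inner : ⟪ge, ge + l • gp⟫ = ‖ge‖ ^ 2 + l * ⟪gp, ge⟫ := by
    rw [inner_add_right, inner_smul_right, real_inner_self_eq_norm_sq, real_inner_comm]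
  rw [h_norm, h_inner]
  ring

/-- When `g_p = 0` the multiplier is `0` (as `x / 0 = 0`), so slackness holds in that case too. -/
theorem optimalMultiplier_mul_slack (ge gp : E) (ε : ℝ) :
    optimalMultiplier ge gp ε *
      (⟪gp, ge⟫ + ε + optimalMultiplier ge gp ε * ‖gp‖ ^ 2) = 0 := by
  rcases eq_or_ne gp 0 with rfl | hgp
  · simp [optimalMultiplier]
  · have hn : ‖gp‖ ^ 2 ≠ 0 := by positivity
    rw [optimalMultiplier, div_mul_cancel₀ _ hn]
    ring

end

theorem primal_value_equals_dual_value_general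
    {E : Type*} [NormedAddCommGroup E] [InnerProductSpace ℝ E]
    (ge gp : E) (ε : ℝ) :
    ⟪ge, ge + ((-⟪gp, ge⟫ - ε) / ‖gp‖ ^ 2) • gp⟫ -
        (1 / 2) * ‖ge + ((-⟪gp, ge⟫ - ε) / ‖gp‖ ^ 2) • gp‖ ^ 2 =
      (1 / 2) * ‖ge + ((-⟪gp, ge⟫ - ε) / ‖gp‖ ^ 2) • gp‖ ^ 2 +
        ((-⟪gp, ge⟫ - ε) / ‖gp‖ ^ 2) * ε := by
  rw [primal_eq_dual_sub_mul_slack]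
  exact sub_eq_self.mpr (optimalMultiplier_mul_slack ge gp ε)

/-- Value of the primal at the surgically corrected direction: if
⟨g_p, g_e⟩ < −ε, λ* = (−⟨g_p, g_e⟩ − ε)/‖g_p‖² and d* = g_e + λ* g_p, then
⟨g_e, d*⟩ − ½‖d*‖² = ½‖g_e + λ* g_p‖² + λ* ε. -/
theorem primal_value_equals_dual_value
    {E : Type*} [NormedAddCommGroup E] [InnerProductSpace ℝ E]
    (ge gp : E) (hgp : gp ≠ 0) (ε : ℝ) (hconflict : ⟪gp, ge⟫ < -ε) :
    ⟪ge, ge + ((-⟪gp, ge⟫ - ε) / ‖gp‖ ^ 2) • gp⟫ -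
        (1 / 2) * ‖ge + ((-⟪gp, ge⟫ - ε) / ‖gp‖ ^ 2) • gp‖ ^ 2 =
      (1 / 2) * ‖ge + ((-⟪gp, ge⟫ - ε) / ‖gp‖ ^ 2) • gp‖ ^ 2 +
        ((-⟪gp, ge⟫ - ε) / ‖gp‖ ^ 2) * ε :=
  primal_value_equals_dual_value_general ge gp ε
end
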